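/- Let p > 2, q = p, and C = A/((x_0^2+...+x_N^2, x_1^p,...,x_N^p) : x_0^p) where A = k[x_0,...,x_N]/(∑x_i^2, x_1^p,...,x_N^p). Then C is a graded zero-dimensional Gorenstein ring whose Hilbert function is symmetric about d_N = (N−1)(p−1)/2: dim C_{2d_N − i} = dim C_i for all integers i, and C_i ≠ 0 if and only if 0 ≤ i ≤ 2d_N. -/

import Mathlib

open MvPolynomial Finset

/-- The dimension of the degree-`d` graded piece of the quotient of `k[x_i]` by the
homogeneous ideal `J`. -/
noncomputable def pieceDim {k : Type*} [Field k] {σ : Type*}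
    (J : Ideal (MvPolynomial σ k)) (d : ℕ) : ℕ :=
  Module.finrank k
    (↥(MvPolynomial.homogeneousSubmodule σ k d) ⧸
      (Submodule.comap (MvPolynomial.homogeneousSubmodule σ k d).subtype
        (J.restrictScalars k)))

/-- The same, indexed by integers (zero in negative degrees). -/
noncomputable def pieceDimZ {k : Type*} [Field k] {σ : Type*}
    (J : Ideal (MvPolynomial σ k)) (d : ℤ) : ℕ :=
  if 0 ≤ d then pieceDim J d.toNat else 0

/-!
Write `S = k[x₀, …, x_N]` (`N = n + 1`), `R = k[x₁, …, x_N]` and `s = ∑_{i ≥ 1} x_i²`.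
Through `finSuccEquiv`, `S = R[x₀]` and `A = S/I_A = B[x₀]/(x₀² + s)` with
`B = R/(x₁^p, …, x_N^p)`, a free `B`-module on `1, x₀`. The ring `B` is Gorenstein: the
coefficient of `(x₁ ⋯ x_N)^{p-1}` is a functional whose annihilator is exactly `(x_i^p)`.
Composed with the `x₀`-coordinate it gives a functional `λ` on `S` whose annihilator
`{f | λ(f S) = 0}` is exactly `I_A`, and `λ` lives in the single degree `N(p-1) + 1`.
Hence for `i + j = (N-1)(p-1)` the pairing `(f, g) ↦ λ(x₀^p f g)` on `S_i × S_j` has left and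
right kernels the degree pieces of `I_C = I_A : x₀^p`, so `dim C_i = dim C_j`; and every piece
of degree above `(N-1)(p-1)` lies in `I_C`, which makes `C` finite-dimensional. Finally
`λ(x₀^p (x₂ ⋯ x_N)^{p-1}) = (-1)^{(p-1)/2}`, so `C_{(N-1)(p-1)} ≠ 0`, and then no lower piece
vanishes either.
-/

theorem LinearMap.finrank_range_flip {K V W : Type*} [Field K] [AddCommGroup V] [Module K V]
    [AddCommGroup W] [Module K W] [FiniteDimensional K W] (B : V →ₗ[K] W →ₗ[K] K) :
    Module.finrank K (LinearMap.range B.flip) = Module.finrank K (LinearMap.range B) := by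
  have h : B.flip = B.dualMap ∘ₗ (Module.evalEquiv K W).toLinearMap := rfl
  rw [h, LinearMap.range_comp_of_range_eq_top _ (LinearEquiv.range _),
    LinearMap.finrank_range_dualMap_eq_finrank_range]

namespace MvPolynomial

variable {σ : Type*}

section CommSemiring

variable {R : Type*} [CommSemiring R]

theorem homogeneousSubmodule_le_ideal_of_le {J : Ideal (MvPolynomial σ R)} {d e : ℕ}
    (hde : d ≤ e) (hd : homogeneousSubmodule σ R d ≤ J.restrictScalars R) :
    homogeneousSubmodule σ R e ≤ J.restrictScalars R := by
  have hvars : idealOfVars σ R ^ d ≤ J := by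
    rw [pow_idealOfVars_eq_span, Ideal.span_le]
    rintro _ ⟨m, hm, rfl⟩
    exact hd (isHomogeneous_monomial _ hm)
  intro f hf
  refine hvars (Ideal.pow_le_pow_right hde ((mem_pow_idealOfVars_iff e f).mpr fun m hm => ?_))
  rw [← hf (mem_support_iff.mp hm), Finsupp.degree_eq_weight_one]
  rfl

theorem mem_span_X_pow_succ_iff_forall_coeff_mul_eq_zero (w : σ →₀ ℕ)
    (b : MvPolynomial σ R) :
    b ∈ Ideal.span (Set.range fun i => X i ^ (w i + 1)) ↔ ∀ r, coeff w (b * r) = 0 := by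
  classical
  have hgen : (Set.range fun i => (X i : MvPolynomial σ R) ^ (w i + 1))
      = (fun s => monomial s (1 : R)) '' Set.range fun i => Finsupp.single i (w i + 1) := by
    rw [← Set.range_comp]
    simp [Function.comp_def, X_pow_eq_monomial]
  constructor
  · intro hb
    induction hb using Submodule.span_induction with
    | mem x hx =>
      obtain ⟨i, rfl⟩ := hx
      intro r
      change coeff w (X i ^ (w i + 1) * r) = 0
      rw [X_pow_eq_monomial, coeff_monomial_mul', if_neg fun h => ?_]
      have := Finsupp.single_le_iff.mp h
      omega
    | zero => simp
    | add x y _ _ hx hy => intro r; rw [add_mul, coeff_add, hx, hy, add_zero]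
    | smul c x _ hx => intro r; rw [smul_eq_mul, mul_assoc, mul_comm, mul_assoc, hx]
  · intro h
    rw [hgen, mem_ideal_span_monomial_image]
    by_contra! hb
    obtain ⟨m, hm, hmw⟩ := hb
    have hle : m ≤ w := fun i => by
      by_contra! hi
      exact hmw _ ⟨i, rfl⟩ (Finsupp.single_le_iff.mpr hi)
    have := h (monomial (w - m) 1)
    rw [coeff_mul_monomial', if_pos tsub_le_self, tsub_tsub_cancel_of_le hle, mul_one] at this
    exact mem_support_iff.mp hm this

theorem finSuccEquiv_rename_succ {n : ℕ} (b : MvPolynomial (Fin n) R) :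
    finSuccEquiv R n (rename Fin.succ b) = Polynomial.C b := by
  induction b using MvPolynomial.induction_on with
  | C c => simp [finSuccEquiv_apply]
  | add f g hf hg => simp [hf, hg]
  | mul_X f i hf => simp [hf, finSuccEquiv_X_succ]

theorem coeff_single_sum_X_sq_pow [Fintype σ] (j : σ) (r : ℕ) :
    coeff (Finsupp.single j (2 * r)) ((∑ i, X i ^ 2 : MvPolynomial σ R) ^ r) = 1 := by
  induction r with
  | zero => simp
  | succ r ih =>
    rw [pow_succ, Finset.mul_sum, coeff_sum, Finset.sum_eq_single j]
    · rw [X_pow_eq_monomial, mul_add, mul_one, Finsupp.single_add, coeff_mul_monomial, ih, mul_one]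
    · intro i _ hij
      rw [X_pow_eq_monomial, coeff_mul_monomial', if_neg fun h => ?_]
      have := h i
      simp [hij] at this
    · simp


end CommSemiring

variable {k : Type*} [Field k]

instance [Finite σ] (d : ℕ) : Module.Finite k (homogeneousSubmodule σ k d) :=
  Module.Finite.iff_fg.mpr (homogeneousSubmodule_fg σ k d)

theorem finite_quotient_of_homogeneousSubmodule_le [Finite σ] (J : Ideal (MvPolynomial σ k))
    (D : ℕ) (hJ : ∀ d, D < d → homogeneousSubmodule σ k d ≤ J.restrictScalars k) :
    Module.Finite k (MvPolynomial σ k ⧸ J) := by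
  let V := ⨆ d ∈ Finset.range (D + 1), homogeneousSubmodule σ k d
  have hV : V.FG := Submodule.fg_biSup _ _ fun d _ => homogeneousSubmodule_fg σ k d
  have hmap : V.map (Ideal.Quotient.mkₐ k J).toLinearMap = ⊤ := by
    refine eq_top_iff.mpr fun x _ => ?_
    obtain ⟨f, rfl⟩ := Ideal.Quotient.mk_surjective x
    rw [← sum_homogeneousComponent f, map_sum]
    refine Submodule.sum_mem _ fun d _ => ?_
    by_cases hd : d ≤ D
    · refine ⟨_, ?_, rfl⟩
      exact Submodule.mem_iSup_of_mem d (Submodule.mem_iSup_of_mem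
        (Finset.mem_range.mpr (Nat.lt_succ_of_le hd)) (homogeneousComponent_isHomogeneous d f))
    · rw [Ideal.Quotient.eq_zero_iff_mem.mpr
        (hJ d (not_le.mp hd) (homogeneousComponent_isHomogeneous d f))]
      exact zero_mem _
  exact Module.finite_def.mpr (hmap ▸ hV.map _)

end MvPolynomial

section PieceDim

variable {σ k : Type*} [Field k]

theorem pieceDim_eq_zero_iff [Finite σ] {J : Ideal (MvPolynomial σ k)} {d : ℕ} :
    pieceDim J d = 0 ↔ homogeneousSubmodule σ k d ≤ J.restrictScalars k := by
  rw [pieceDim, Module.finrank_zero_iff, Submodule.Quotient.subsingleton_iff,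
    Submodule.comap_subtype_eq_top]

theorem pieceDim_eq_finrank_range {V : Type*} [AddCommGroup V] [Module k V]
    {J : Ideal (MvPolynomial σ k)} {d : ℕ} (B : homogeneousSubmodule σ k d →ₗ[k] V)
    (hB : LinearMap.ker B = (J.restrictScalars k).comap (homogeneousSubmodule σ k d).subtype) :
    pieceDim J d = Module.finrank k (LinearMap.range B) := by
  rw [pieceDim, ← hB]
  exact B.quotKerEquivRange.finrank_eq

theorem pieceDimZ_symm_and_support (J : Ideal (MvPolynomial σ k)) (D : ℕ)
    (hsymm : ∀ i j, i + j = D → pieceDim J i = pieceDim J j)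
    (hsupp : ∀ d, pieceDim J d ≠ 0 ↔ d ≤ D) :
    (∀ i : ℤ, pieceDimZ J (D - i) = pieceDimZ J i) ∧
      ∀ i : ℤ, pieceDimZ J i ≠ 0 ↔ 0 ≤ i ∧ i ≤ D := by
  have hzero (d : ℕ) (hd : D < d) : pieceDim J d = 0 := by
    by_contra h
    exact (not_le.mpr hd) ((hsupp d).mp h)
  refine ⟨fun i => ?_, fun i => ?_⟩
  · unfold pieceDimZ
    by_cases h0 : 0 ≤ i <;> by_cases hD : i ≤ D
    · rw [if_pos (by omega), if_pos h0]
      exact hsymm _ _ (by omega)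
    · rw [if_neg (by omega), if_pos h0, hzero _ (by omega)]
    · rw [if_pos (by omega), if_neg h0, hzero _ (by omega)]
    · omega
  · unfold pieceDimZ
    split_ifs with h0
    · rw [hsupp]
      omega
    · simp [h0]

end PieceDim

namespace Polynomial

variable {R : Type*} [CommRing R] (a : R)

/-- The coordinate along `root` of the class of `P` in `R[X]/(X² - a)`, which is free on
`1, root`. -/
noncomputable def rootCoeff : R[X] →ₗ[R] R :=
  Polynomial.lcoeff R 1 ∘ₗ Polynomial.modByMonicHom (Polynomial.X ^ 2 - Polynomial.C a)

lemma rootCoeff_apply (P : R[X]) :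
    rootCoeff a P = (P %ₘ (Polynomial.X ^ 2 - Polynomial.C a)).coeff 1 := rfl

lemma rootCoeff_mul_left (G : R[X]) :
    rootCoeff a ((Polynomial.X ^ 2 - Polynomial.C a) * G) = 0 := by
  rw [rootCoeff_apply, Polynomial.self_mul_modByMonic (Polynomial.monic_X_pow_sub_C a two_ne_zero),
    Polynomial.coeff_zero]

variable [Nontrivial R]

lemma modByMonic_C_mul_X_pow (b : R) (r e : ℕ) (he : e < 2) :
    (Polynomial.C b * Polynomial.X ^ (2 * r + e)) %ₘ (Polynomial.X ^ 2 - Polynomial.C a)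
      = Polynomial.C (a ^ r * b) * Polynomial.X ^ e := by
  have hq := Polynomial.monic_X_pow_sub_C a two_ne_zero
  rw [Polynomial.modByMonic_eq_of_dvd_sub hq, (Polynomial.modByMonic_eq_self_iff hq).mpr]
  · refine (Polynomial.degree_C_mul_X_pow_le _ _).trans_lt ?_
    rw [Polynomial.degree_X_pow_sub_C two_pos]
    exact_mod_cast he
  · have : Polynomial.C b * Polynomial.X ^ (2 * r + e)
          - Polynomial.C (a ^ r * b) * Polynomial.X ^ e
        = Polynomial.C b * Polynomial.X ^ e * ((Polynomial.X ^ 2) ^ r - Polynomial.C a ^ r) := by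
      rw [map_mul, map_pow]; ring
    rw [this]
    exact Dvd.dvd.mul_left (sub_dvd_pow_sub_pow _ _ r) _

lemma rootCoeff_C_mul_X_pow (b : R) (r e : ℕ) (he : e < 2) :
    rootCoeff a (Polynomial.C b * Polynomial.X ^ (2 * r + e)) = if e = 1 then a ^ r * b else 0 := by
  rw [rootCoeff_apply, modByMonic_C_mul_X_pow a b r e he, Polynomial.coeff_C_mul_X_pow]
  simp only [eq_comm]

lemma mem_map_C_sup_span_of_rootCoeff_mem (J : Ideal R) (P : R[X])
    (h₁ : rootCoeff a P ∈ J) (h₀ : rootCoeff a (Polynomial.X * P) ∈ J) :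
    P ∈ J.map Polynomial.C ⊔ Ideal.span {Polynomial.X ^ 2 - Polynomial.C a} := by
  set q := Polynomial.X ^ 2 - Polynomial.C a
  have hq : q.Monic := Polynomial.monic_X_pow_sub_C a two_ne_zero
  obtain ⟨D, c₀, c₁, rfl⟩ :
      ∃ D c₀ c₁, P = q * D + Polynomial.C c₁ * Polynomial.X + Polynomial.C c₀ := by
    have hdeg : (P %ₘ q).degree ≤ 1 := by
      have := Polynomial.degree_modByMonic_lt P hq
      rw [Polynomial.degree_X_pow_sub_C two_pos] at this
      exact Order.le_of_lt_succ this
    refine ⟨P /ₘ q, (P %ₘ q).coeff 0, (P %ₘ q).coeff 1, ?_⟩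
    conv_lhs =>
      rw [← Polynomial.modByMonic_add_div P q, Polynomial.eq_X_add_C_of_degree_le_one hdeg]
    ring
  have hqG (G : R[X]) : rootCoeff a (q * G) = 0 := rootCoeff_mul_left a G
  have hC (b : R) : rootCoeff a (Polynomial.C b) = 0 := by
    simpa using rootCoeff_C_mul_X_pow a b 0 0 two_pos
  have hCX (b : R) : rootCoeff a (Polynomial.C b * Polynomial.X) = b := by
    simpa using rootCoeff_C_mul_X_pow a b 0 1 one_lt_two
  have hCX2 (b : R) : rootCoeff a (Polynomial.C b * Polynomial.X ^ 2) = 0 := by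
    simpa using rootCoeff_C_mul_X_pow a b 1 0 two_pos
  have hXP : Polynomial.X * (q * D + Polynomial.C c₁ * Polynomial.X + Polynomial.C c₀)
      = q * (Polynomial.X * D) + Polynomial.C c₁ * Polynomial.X ^ 2
        + Polynomial.C c₀ * Polynomial.X := by
    ring
  rw [hXP] at h₀
  simp only [map_add, hqG, hC, hCX, hCX2, zero_add, add_zero] at h₁ h₀
  refine add_mem (add_mem ?_ ?_) ?_
  · exact Ideal.mem_sup_right (Ideal.mul_mem_right _ _ (Ideal.subset_span rfl))
  · exact Ideal.mem_sup_left (Ideal.mul_mem_right _ _ (Ideal.mem_map_of_mem _ h₁))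
  · exact Ideal.mem_sup_left (Ideal.mem_map_of_mem _ h₀)

end Polynomial

namespace QuadricQuotient

open Polynomial (rootCoeff rootCoeff_mul_left rootCoeff_C_mul_X_pow
  mem_map_C_sup_span_of_rootCoeff_mem)

variable (k : Type*) [Field k] (p n : ℕ)

noncomputable def idealA : Ideal (MvPolynomial (Fin (n + 2)) k) :=
  Ideal.span ({∑ i, X i ^ 2} ∪
    Set.range fun i : Fin (n + 1) => (X i.succ : MvPolynomial (Fin (n + 2)) k) ^ p)

noncomputable def idealC : Ideal (MvPolynomial (Fin (n + 2)) k) :=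
  Submodule.colon (idealA k p n) (Ideal.span {(X 0 : MvPolynomial (Fin (n + 2)) k) ^ p})

variable {k p n} in
lemma mem_idealC_iff {f : MvPolynomial (Fin (n + 2)) k} :
    f ∈ idealC k p n ↔ f * X 0 ^ p ∈ idealA k p n :=
  Ideal.mem_colon_span_singleton

noncomputable def sumSq : MvPolynomial (Fin (n + 1)) k := ∑ i, X i ^ 2

noncomputable def socleExp : Fin (n + 1) →₀ ℕ := Finsupp.equivFunOnFinite.symm fun _ => p - 1

lemma socleExp_apply (i : Fin (n + 1)) : socleExp p n i = p - 1 := rfl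

/-- Through `finSuccEquiv`, `x₀` becomes the variable of `R[X]` with `R = k[x₁, …, x_N]`, and
`S/I_A = B[X]/(X² + ∑ x_i²)` with `B = R/(x_i^p)`. The functional takes the `X`-coordinate and
then the coefficient of the socle monomial `(x₁ ⋯ x_N)^{p-1}` of `B`. -/
noncomputable def socleFunctional : MvPolynomial (Fin (n + 2)) k →ₗ[k] k :=
  lcoeff k (socleExp p n) ∘ₗ (rootCoeff (-sumSq k n)).restrictScalars k ∘ₗ
    (finSuccEquiv k (n + 1)).toLinearMap

lemma socleFunctional_apply (f : MvPolynomial (Fin (n + 2)) k) :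
    socleFunctional k p n f =
      coeff (socleExp p n) (rootCoeff (-sumSq k n) (finSuccEquiv k (n + 1) f)) := rfl

lemma finSuccEquiv_sum_X_sq :
    finSuccEquiv k (n + 1) (∑ i, X i ^ 2) = Polynomial.X ^ 2 - Polynomial.C (-sumSq k n) := by
  rw [map_sum, Fin.sum_univ_succ]
  simp only [map_pow, finSuccEquiv_X_zero, finSuccEquiv_X_succ, sumSq, map_neg, map_sum,
    sub_neg_eq_add]

lemma isHomogeneous_sumSq : (sumSq k n).IsHomogeneous 2 :=
  IsHomogeneous.sum _ _ _ fun i _ => isHomogeneous_X_pow i 2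

lemma degree_socleExp : (socleExp p n).degree = (n + 1) * (p - 1) := by
  simp [Finsupp.degree_eq_sum, socleExp]

lemma degree_erase_socleExp : (Finsupp.erase 0 (socleExp p n)).degree = n * (p - 1) := by
  have h := congrArg Finsupp.degree (Finsupp.single_add_erase 0 (socleExp p n))
  rw [map_add, Finsupp.degree_single, degree_socleExp, socleExp_apply, add_one_mul] at h
  omega

lemma socleFunctional_mul_eq_zero_of_mem_idealA (hp : 0 < p) {h : MvPolynomial (Fin (n + 2)) k}
    (hh : h ∈ idealA k p n) (g : MvPolynomial (Fin (n + 2)) k) :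
    socleFunctional k p n (h * g) = 0 := by
  induction hh using Submodule.span_induction generalizing g with
  | mem x hx =>
    rcases hx with rfl | ⟨i, rfl⟩
    · rw [socleFunctional_apply, map_mul, finSuccEquiv_sum_X_sq, rootCoeff_mul_left,
        coeff_zero]
    · rw [socleFunctional_apply, map_mul, map_pow, finSuccEquiv_X_succ, ← map_pow,
        ← Polynomial.smul_eq_C_mul, map_smul, smul_eq_mul]
      refine (mem_span_X_pow_succ_iff_forall_coeff_mul_eq_zero (socleExp p n) _).mp
        (Ideal.subset_span ⟨i, ?_⟩) _
      simp only [socleExp_apply, Nat.sub_add_cancel hp]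
  | zero => rw [zero_mul, map_zero]
  | add x y _ _ hx hy => rw [add_mul, map_add, hx, hy, add_zero]
  | smul c x _ hx => rw [smul_eq_mul, mul_comm c x, mul_assoc, hx]

lemma mem_idealA_of_forall_socleFunctional_mul_eq_zero (hp : 0 < p)
    {f : MvPolynomial (Fin (n + 2)) k} (hf : ∀ g, socleFunctional k p n (f * g) = 0) :
    f ∈ idealA k p n := by
  set e := finSuccEquiv k (n + 1)
  set JB : Ideal (MvPolynomial (Fin (n + 1)) k) :=
    Ideal.span (Set.range fun i => X i ^ (socleExp p n i + 1))
  have hcoord (G) : rootCoeff (-sumSq k n) (G * e f) ∈ JB := by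
    refine (mem_span_X_pow_succ_iff_forall_coeff_mul_eq_zero _ _).mpr fun r => ?_
    have := hf (e.symm (Polynomial.C r * G))
    rwa [socleFunctional_apply, map_mul, AlgEquiv.apply_symm_apply, mul_left_comm,
      ← Polynomial.smul_eq_C_mul, map_smul, smul_eq_mul, mul_comm, mul_comm (e f)] at this
  have hmem := mem_map_C_sup_span_of_rootCoeff_mem _ JB (e f)
    (by simpa using hcoord 1) (hcoord Polynomial.X)
  have hle : JB.map Polynomial.C ⊔ Ideal.span {Polynomial.X ^ 2 - Polynomial.C (-sumSq k n)}
      ≤ (idealA k p n).comap e.symm := by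
    refine sup_le ?_ ?_
    · rw [Ideal.map_le_iff_le_comap, Ideal.span_le]
      rintro _ ⟨i, rfl⟩
      have hXi : e.symm (Polynomial.C (X i)) = X i.succ :=
        (AlgEquiv.symm_apply_eq e).mpr finSuccEquiv_X_succ.symm
      simp only [SetLike.mem_coe, Ideal.mem_comap, map_pow, hXi,
        socleExp_apply, Nat.sub_add_cancel hp]
      exact Ideal.subset_span (Or.inr ⟨i, rfl⟩)
    · rw [Ideal.span_le, Set.singleton_subset_iff, SetLike.mem_coe, Ideal.mem_comap,
        ← finSuccEquiv_sum_X_sq]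
      change e.symm (e _) ∈ _
      rw [AlgEquiv.symm_apply_apply]
      exact Ideal.subset_span (Or.inl rfl)
  simpa using hle hmem

lemma socleFunctional_eq_zero_of_isHomogeneous {f : MvPolynomial (Fin (n + 2)) k} {d : ℕ}
    (hf : f.IsHomogeneous d) (hd : d ≠ (n + 1) * (p - 1) + 1) : socleFunctional k p n f = 0 := by
  have hdeg : (finSuccEquiv k (n + 1) f).natDegree < d + 1 := by
    rw [natDegree_finSuccEquiv]
    exact Nat.lt_succ_of_le ((degreeOf_le_totalDegree f 0).trans hf.totalDegree_le)
  rw [socleFunctional_apply, (finSuccEquiv k (n + 1) f).as_sum_range_C_mul_X_pow' hdeg, map_sum,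
    coeff_sum]
  refine Finset.sum_eq_zero fun e he => ?_
  have he : e ≤ d := Nat.lt_succ_iff.mp (Finset.mem_range.mp he)
  obtain ⟨r, rfl | rfl⟩ := Nat.even_or_odd' e
  · rw [← add_zero (2 * r), rootCoeff_C_mul_X_pow _ _ _ _ two_pos, if_neg zero_ne_one,
      coeff_zero]
  · rw [rootCoeff_C_mul_X_pow _ _ _ _ one_lt_two, if_pos rfl]
    have hcoeff := hf.finSuccEquiv_coeff_isHomogeneous (2 * r + 1) (d - (2 * r + 1)) (by omega)
    refine (((isHomogeneous_sumSq k n).neg.pow r).mul hcoeff).coeff_eq_zero ?_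
    rw [degree_socleExp]
    omega

lemma mem_idealA_of_isHomogeneous (hp : 0 < p) {u : MvPolynomial (Fin (n + 2)) k} {d : ℕ}
    (hu : u.IsHomogeneous d)
    (h : ∀ e g, g.IsHomogeneous e → d + e = (n + 1) * (p - 1) + 1 →
      socleFunctional k p n (u * g) = 0) :
    u ∈ idealA k p n := by
  refine mem_idealA_of_forall_socleFunctional_mul_eq_zero k p n hp fun g => ?_
  rw [← sum_homogeneousComponent g, Finset.mul_sum, map_sum]
  refine Finset.sum_eq_zero fun e _ => ?_
  have hg := homogeneousComponent_isHomogeneous e g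
  by_cases he : d + e = (n + 1) * (p - 1) + 1
  · exact h e _ hg he
  · exact socleFunctional_eq_zero_of_isHomogeneous k p n (hu.mul hg) he

noncomputable def pairing (i j : ℕ) :
    homogeneousSubmodule (Fin (n + 2)) k i →ₗ[k]
      homogeneousSubmodule (Fin (n + 2)) k j →ₗ[k] k :=
  ((LinearMap.mul k _).compr₂ (socleFunctional k p n) ∘ₗ
    LinearMap.mulRight k (X 0 ^ p)).compl₁₂ (Submodule.subtype _) (Submodule.subtype _)

lemma pairing_apply {i j : ℕ} (f : homogeneousSubmodule (Fin (n + 2)) k i)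
    (g : homogeneousSubmodule (Fin (n + 2)) k j) :
    pairing k p n i j f g =
      socleFunctional k p n
        ((f : MvPolynomial (Fin (n + 2)) k) * X 0 ^ p * (g : MvPolynomial (Fin (n + 2)) k)) :=
  rfl

lemma pairing_flip (i j : ℕ) : (pairing k p n i j).flip = pairing k p n j i := by
  ext f g
  rw [LinearMap.flip_apply, pairing_apply, pairing_apply]
  congr 1
  ring

lemma ker_pairing (hp : 0 < p) {i j : ℕ} (hij : i + p + j = (n + 1) * (p - 1) + 1) :
    LinearMap.ker (pairing k p n i j) =
      ((idealC k p n).restrictScalars k).comap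
        (homogeneousSubmodule (Fin (n + 2)) k i).subtype := by
  ext f
  simp only [LinearMap.mem_ker, Submodule.mem_comap, Submodule.subtype_apply,
    Submodule.restrictScalars_mem, mem_idealC_iff]
  constructor
  · intro hf
    refine mem_idealA_of_isHomogeneous k p n hp
      (((mem_homogeneousSubmodule _ _).mp f.2).mul (isHomogeneous_X_pow 0 p))
      fun e g hg he => ?_
    obtain rfl : e = j := by omega
    exact LinearMap.congr_fun hf ⟨g, hg⟩
  · intro hf
    ext g
    exact socleFunctional_mul_eq_zero_of_mem_idealA k p n hp hf g

lemma socleFunctional_rename_monomial_mul_X_zero_pow {m : ℕ} (hm : p = 2 * m + 1) :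
    socleFunctional k p n
      (rename Fin.succ (monomial (Finsupp.erase 0 (socleExp p n)) 1) * X 0 ^ p) = (-1) ^ m := by
  set v := Finsupp.erase 0 (socleExp p n)
  have hsplit : socleExp p n = Finsupp.single 0 (2 * m) + v := by
    rw [← Finsupp.single_add_erase 0 (socleExp p n), socleExp_apply, show p - 1 = 2 * m by omega]
  rw [socleFunctional_apply, hsplit, map_mul, finSuccEquiv_rename_succ, map_pow,
    finSuccEquiv_X_zero, hm, rootCoeff_C_mul_X_pow _ _ _ _ one_lt_two, if_pos rfl, neg_pow,
    ← C_1, ← C_neg, ← C_pow, mul_assoc, coeff_C_mul, coeff_mul_monomial, sumSq,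
    coeff_single_sum_X_sq_pow, mul_one, mul_one]

theorem pieceDim_idealC_eq_of_add_eq (hp : 0 < p) {i j : ℕ} (hij : i + j = n * (p - 1)) :
    pieceDim (idealC k p n) i = pieceDim (idealC k p n) j := by
  have hsocle : (n + 1) * (p - 1) + 1 = n * (p - 1) + p := by rw [add_one_mul]; omega
  rw [pieceDim_eq_finrank_range _ (ker_pairing k p n hp (j := j) (by omega)),
    pieceDim_eq_finrank_range _ (ker_pairing k p n hp (j := i) (by omega)), ← pairing_flip,
    LinearMap.finrank_range_flip]

theorem homogeneousSubmodule_le_idealC (hp : 0 < p) {d : ℕ} (hd : n * (p - 1) < d) :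
    homogeneousSubmodule (Fin (n + 2)) k d ≤ (idealC k p n).restrictScalars k := by
  intro f hf
  rw [Submodule.restrictScalars_mem, mem_idealC_iff]
  refine mem_idealA_of_isHomogeneous k p n hp (hf.mul (isHomogeneous_X_pow 0 p))
    fun e _ _ he => absurd he ?_
  rw [add_one_mul]
  omega

theorem pieceDim_idealC_ne_zero_iff (hp : Odd p) {d : ℕ} :
    pieceDim (idealC k p n) d ≠ 0 ↔ d ≤ n * (p - 1) := by
  obtain ⟨m, hm⟩ := hp
  rw [Ne, pieceDim_eq_zero_iff]
  refine ⟨fun h => not_lt.mp fun hd => h (homogeneousSubmodule_le_idealC k p n (by omega) hd),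
    fun hd hle => ?_⟩
  have hg : (rename Fin.succ (monomial (Finsupp.erase 0 (socleExp p n)) (1 : k))).IsHomogeneous
      (n * (p - 1)) :=
    (isHomogeneous_monomial _ (degree_erase_socleExp p n)).rename_isHomogeneous
  have hmem := socleFunctional_mul_eq_zero_of_mem_idealA k p n (by omega)
    (mem_idealC_iff.mp (homogeneousSubmodule_le_ideal_of_le hd hle hg)) 1
  rw [mul_one, socleFunctional_rename_monomial_mul_X_zero_pow k p n hm] at hmem
  exact pow_ne_zero m (neg_ne_zero.mpr one_ne_zero) hmem

theorem finite_idealC (hp : 0 < p) :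
    Module.Finite k (MvPolynomial (Fin (n + 2)) k ⧸ idealC k p n) :=
  finite_quotient_of_homogeneousSubmodule_le _ (n * (p - 1)) fun _ hd =>
    homogeneousSubmodule_le_idealC k p n hp hd

end QuadricQuotient

open QuadricQuotient in
theorem hilbert_function_C_general (k : Type*) [Field k] (p : ℕ) [Fact p.Prime]
    (hp : 2 < p) (n : ℕ)
    (IA : Ideal (MvPolynomial (Fin (n + 2)) k))
    (hIA : IA = Ideal.span ({∑ i, X i ^ 2} ∪
      Set.range fun i : Fin (n + 1) => (X i.succ : MvPolynomial (Fin (n + 2)) k) ^ p))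
    (IC : Ideal (MvPolynomial (Fin (n + 2)) k))
    (hIC : IC = Submodule.colon IA (Ideal.span {(X 0 : MvPolynomial (Fin (n + 2)) k) ^ p}))
    (dN : ℤ) (hdN : dN = (n : ℤ) * ((p : ℤ) - 1) / 2) :
    FiniteDimensional k (MvPolynomial (Fin (n + 2)) k ⧸ IC) ∧
      (∀ i : ℤ, pieceDimZ IC (2 * dN - i) = pieceDimZ IC i) ∧
      (∀ i : ℤ, pieceDimZ IC i ≠ 0 ↔ 0 ≤ i ∧ i ≤ 2 * dN) := by
  have hodd : Odd p := (Fact.out : p.Prime).odd_of_ne_two (by omega)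
  have h2dN : 2 * dN = ((n * (p - 1) : ℕ) : ℤ) := by
    obtain ⟨m, rfl⟩ := hodd
    rw [hdN]
    push_cast
    rw [show (n : ℤ) * (2 * m + 1 - 1) = 2 * (n * m) by ring,
      Int.mul_ediv_cancel_left _ two_ne_zero]
    ring
  subst hIA hIC
  rw [h2dN]
  exact ⟨finite_idealC k p n (by omega),
    pieceDimZ_symm_and_support _ _ (fun _ _ => pieceDim_idealC_eq_of_add_eq k p n (by omega))
      fun _ => pieceDim_idealC_ne_zero_iff k p n hodd⟩

/-- Part of Lemma 2.11 of the paper: `C = S/((∑x_i^2, x_1^p,…,x_N^p) : x_0^p)` is a graded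
zero-dimensional (i.e. finite-dimensional over `k`) Gorenstein ring whose Hilbert function
is symmetric about `d_N = (N−1)(p−1)/2`: `dim C_{2d_N−i} = dim C_i` for all integers `i`,
and `C_i ≠ 0` iff `0 ≤ i ≤ 2d_N`. -/
theorem hilbert_function_C (k : Type*) [Field k] (p : ℕ) [Fact p.Prime] [CharP k p]
    (hp : 2 < p) (n : ℕ) (hn : 1 ≤ n)
    (IA : Ideal (MvPolynomial (Fin (n + 2)) k))
    (hIA : IA = Ideal.span ({∑ i, X i ^ 2} ∪
      Set.range fun i : Fin (n + 1) => (X i.succ : MvPolynomial (Fin (n + 2)) k) ^ p))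
    (IC : Ideal (MvPolynomial (Fin (n + 2)) k))
    (hIC : IC = Submodule.colon IA (Ideal.span {(X 0 : MvPolynomial (Fin (n + 2)) k) ^ p}))
    (dN : ℤ) (hdN : dN = (n : ℤ) * ((p : ℤ) - 1) / 2) :
    FiniteDimensional k (MvPolynomial (Fin (n + 2)) k ⧸ IC) ∧
      (∀ i : ℤ, pieceDimZ IC (2 * dN - i) = pieceDimZ IC i) ∧
      (∀ i : ℤ, pieceDimZ IC i ≠ 0 ↔ 0 ≤ i ∧ i ≤ 2 * dN) :=
  hilbert_function_C_general k p hp n IA hIA IC hIC dN hdN
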